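/- In the π-calculus-style conflict structure, a ⋆-pattern does exist: there exist five steps whose cyclically adjacent pairs are in conflict and whose non-adjacent pairs are distributable, using five choices where each step connects two choices with no endpoint-duality restriction. -/

import Mathlib

/-- the set of choices of a step (an unordered pair, modelled as a pair) -/
def ChoiceSet (s : Fin 5 × Fin 5) : Set (Fin 5) := {s.1, s.2}

/-- a π-calculus style step: two distinct choices, no endpoint-duality restriction -/
def ValidStep (s : Fin 5 × Fin 5) : Prop := s.1 ≠ s.2

/-- conflict: the steps share a choice -/
def Conflict (s t : Fin 5 × Fin 5) : Prop := (ChoiceSet s ∩ ChoiceSet t).Nonempty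

/-- distributable: no shared choice -/
def Distributable (s t : Fin 5 × Fin 5) : Prop := ChoiceSet s ∩ ChoiceSet t = ∅

theorem conflict_of_snd_eq_fst {s t : Fin 5 × Fin 5} (h : s.2 = t.1) : Conflict s t :=
  ⟨s.2, by simp [ChoiceSet, h]⟩

theorem distributable_iff {s t : Fin 5 × Fin 5} :
    Distributable s t ↔ s.1 ≠ t.1 ∧ s.1 ≠ t.2 ∧ s.2 ≠ t.1 ∧ s.2 ≠ t.2 := by
  simp only [Distributable, ChoiceSet, ← Set.disjoint_iff_inter_eq_empty, Set.disjoint_insert_left,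
    Set.disjoint_singleton_left, Set.mem_insert_iff, Set.mem_singleton_iff, not_or, and_assoc]

theorem star_pattern_exists_in_pi :
    ∃ sa sb sc sd se : Fin 5 × Fin 5,
      ValidStep sa ∧ ValidStep sb ∧ ValidStep sc ∧ ValidStep sd ∧ ValidStep se ∧
      Conflict sa sb ∧ Conflict sb sc ∧ Conflict sc sd ∧ Conflict sd se ∧
      Conflict se sa ∧
      Distributable sa sc ∧ Distributable sa sd ∧ Distributable sb sd ∧
      Distributable sb se ∧ Distributable sc se := by
  -- The edges of the pentagon on the five choices: its line graph is again a 5-cycle.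
  refine ⟨(0, 1), (1, 2), (2, 3), (3, 4), (4, 0), ?_⟩
  refine ⟨by simp [ValidStep], by simp [ValidStep], by simp [ValidStep], by simp [ValidStep],
    by simp [ValidStep], ?_⟩
  refine ⟨conflict_of_snd_eq_fst rfl, conflict_of_snd_eq_fst rfl, conflict_of_snd_eq_fst rfl,
    conflict_of_snd_eq_fst rfl, conflict_of_snd_eq_fst rfl, ?_⟩
  exact ⟨distributable_iff.2 (by decide), distributable_iff.2 (by decide),
    distributable_iff.2 (by decide), distributable_iff.2 (by decide),
    distributable_iff.2 (by decide)⟩
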